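/- arXiv:2204.10775 — 3 statements merged into one kernel-verified Lean document; each statement's English description precedes it below -/
import Mathlib

section
/- Let C be a switching class of tournaments on a finite vertex set V and let T1, …, Tk be a complete set of representatives of the isomorphism classes of tournaments in C. Then ∑_{i=1}^k 1/|Aut(T_i)| = 2^{|V|−1} / |Aut(C)|. -/
def IsTournament {V : Type*} (e : V → V → ℤ) : Prop :=
  (∀ x y : V, e y x = - e x y) ∧ ∀ x y : V, x ≠ y → e x y = 1 ∨ e x y = -1

def gT {V : Type*} (e : V → V → ℤ) : V → V → V → ℤ :=
  fun x y z => e x y * e y z * e z x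

open scoped Classical in
noncomputable def switchT {V : Type*} (e : V → V → ℤ) (X : Set V) : V → V → ℤ :=
  fun x y => if x ∈ X ↔ y ∈ X then e x y else - e x y

def SwitchEquiv {V : Type*} (e₁ e₂ : V → V → ℤ) : Prop :=
  ∃ X : Set V, e₂ = switchT e₁ X

def autT {V : Type*} (e : V → V → ℤ) : Set (Equiv.Perm V) :=
  {σ | ∀ x y, e (σ x) (σ y) = e x y}

def autG {V : Type*} (g : V → V → V → ℤ) : Set (Equiv.Perm V) :=
  {σ | ∀ x y z, g (σ x) (σ y) (σ z) = g x y z}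

def TournIso {V₁ V₂ : Type*} (e₁ : V₁ → V₁ → ℤ) (e₂ : V₂ → V₂ → ℤ) : Prop :=
  ∃ φ : V₁ ≃ V₂, ∀ x y, e₂ (φ x) (φ y) = e₁ x y

/-! Aut(C) acts on the switching class C, and since an isomorphism between two members of C
preserves their common oriented two-graph, the Aut(C)-orbits in C are exactly the isomorphism
classes, while the stabiliser of T is Aut(T). By orbit–stabiliser the orbit of Tᵢ has
|Aut(C)| / |Aut(Tᵢ)| elements, and these orbits partition C. Finally |C| = 2^(|V|-1): switching
with respect to X and to its complement gives the same tournament, and this is the only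
coincidence, as the edges at a fixed vertex x₀ determine X up to complement. -/

open MulAction Function

theorem MulAction.sum_one_div_card_stabilizer {G α ι : Type*} [Group G] [Finite G]
    [MulAction G α] [Fintype ι] (x : ι → α) (hx : ∀ i j, x j ∈ orbit G (x i) → i = j) :
    ∑ i, (1 : ℚ) / Nat.card (stabilizer G (x i)) =
      (⋃ i, orbit G (x i)).ncard / Nat.card G := by
  have hdisj : Pairwise (Disjoint on fun i => orbit G (x i)) := fun i j hij =>
    (orbit.eq_or_disjoint (x i) (x j)).resolve_left fun h =>
      hij (hx i j (h ▸ mem_orbit_self (x j)))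
  rw [Set.ncard_iUnion_of_finite (fun i => Finite.finite_mulAction_orbit (x i)) hdisj,
    finsum_eq_sum_of_fintype, Nat.cast_sum, Finset.sum_div]
  refine Finset.sum_congr rfl fun i _ => ?_
  rw [← index_stabilizer, ← (stabilizer G (x i)).card_mul_index, Nat.cast_mul,
    div_mul_cancel_right₀ (mod_cast Subgroup.index_ne_zero_of_finite), one_div]

section Tournaments

variable {V : Type*}

instance : MulAction (Equiv.Perm V) (V → V → ℤ) where
  smul σ e x y := e (σ⁻¹ x) (σ⁻¹ y)
  one_smul _ := rfl
  mul_smul _ _ _ := rfl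

@[simp] lemma perm_smul_apply (σ : Equiv.Perm V) (e : V → V → ℤ) (x y : V) :
    (σ • e) x y = e (σ⁻¹ x) (σ⁻¹ y) := rfl

lemma smul_eq_iff_forall_apply {σ : Equiv.Perm V} {e e' : V → V → ℤ} :
    σ • e = e' ↔ ∀ x y, e' (σ x) (σ y) = e x y := by
  refine ⟨fun h x y => by simp [← h], fun h => funext₂ fun x y => by simp [← h]⟩

lemma mem_autT_iff_smul_eq {σ : Equiv.Perm V} {e : V → V → ℤ} :
    σ ∈ autT e ↔ σ • e = e :=
  smul_eq_iff_forall_apply.symm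

lemma tournIso_iff_exists_smul_eq {e e' : V → V → ℤ} :
    TournIso e e' ↔ ∃ σ : Equiv.Perm V, σ • e = e' := by
  simp only [smul_eq_iff_forall_apply, TournIso]

lemma autT_subset_autG_gT (e : V → V → ℤ) : autT e ⊆ autG (gT e) := fun σ hσ x y z => by
  simp only [gT, hσ _ _]

def autGroup (g : V → V → V → ℤ) : Subgroup (Equiv.Perm V) where
  carrier := autG g
  mul_mem' hσ hτ x y z := (hσ _ _ _).trans (hτ x y z)
  one_mem' _ _ _ := rfl
  inv_mem' {σ} hσ x y z := by simpa using (hσ (σ⁻¹ x) (σ⁻¹ y) (σ⁻¹ z)).symm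

@[simp] lemma mem_autGroup {g : V → V → V → ℤ} {σ : Equiv.Perm V} :
    σ ∈ autGroup g ↔ σ ∈ autG g := Iff.rfl

lemma card_autGroup (g : V → V → V → ℤ) : Nat.card (autGroup g) = (autG g).ncard :=
  Nat.card_coe_set_eq (autG g)

lemma gT_smul (σ : Equiv.Perm V) (e : V → V → ℤ) (x y z : V) :
    gT (σ • e) x y z = gT e (σ⁻¹ x) (σ⁻¹ y) (σ⁻¹ z) := rfl

lemma gT_smul_eq_iff {σ : Equiv.Perm V} {e : V → V → ℤ} :
    gT (σ • e) = gT e ↔ σ ∈ autG (gT e) := by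
  refine ⟨fun h x y z => ?_, fun h => funext₃ fun x y z => ?_⟩
  · simpa [gT_smul] using (congrFun₃ h (σ x) (σ y) (σ z)).symm
  · simpa [gT_smul] using (h (σ⁻¹ x) (σ⁻¹ y) (σ⁻¹ z)).symm

namespace IsTournament

variable {e : V → V → ℤ}

lemma apply_self (h : IsTournament e) (x : V) : e x x = 0 := by
  have := h.1 x x
  omega

lemma mul_self_apply (h : IsTournament e) {x y : V} (hxy : x ≠ y) : e x y * e x y = 1 := by
  rcases h.2 x y hxy with h | h <;> simp [h]

lemma smul (h : IsTournament e) (σ : Equiv.Perm V) : IsTournament (σ • e) :=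
  ⟨fun _ _ => h.1 _ _, fun _ _ hxy => h.2 _ _ (σ⁻¹.injective.ne hxy)⟩

end IsTournament

open scoped Classical in
noncomputable def switchSign (X : Set V) (x : V) : ℤ := if x ∈ X then -1 else 1

lemma switchSign_eq_one_or (X : Set V) (x : V) : switchSign X x = 1 ∨ switchSign X x = -1 := by
  by_cases hx : x ∈ X <;> simp [switchSign, hx]

lemma switchSign_mul_self (X : Set V) (x : V) : switchSign X x * switchSign X x = 1 := by
  rcases switchSign_eq_one_or X x with h | h <;> simp [h]

lemma switchT_apply (e : V → V → ℤ) (X : Set V) (x y : V) :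
    switchT e X x y = switchSign X x * e x y * switchSign X y := by
  by_cases hx : x ∈ X <;> by_cases hy : y ∈ X <;> simp [switchT, switchSign, hx, hy]

lemma switchT_compl (e : V → V → ℤ) (X : Set V) : switchT e Xᶜ = switchT e X := by
  funext x y
  by_cases hx : x ∈ X <;> by_cases hy : y ∈ X <;> simp [switchT, hx, hy]

lemma gT_switchT (e : V → V → ℤ) (X : Set V) : gT (switchT e X) = gT e := by
  funext x y z
  simp only [gT, switchT_apply]
  have hx := switchSign_mul_self X x
  have hy := switchSign_mul_self X y
  have hz := switchSign_mul_self X z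
  linear_combination (e x y * e y z * e z x) *
    (switchSign X y * switchSign X y * switchSign X z * switchSign X z * hx +
      switchSign X z * switchSign X z * hy + hz)

lemma IsTournament.switchT {e : V → V → ℤ} (h : IsTournament e) (X : Set V) :
    IsTournament (switchT e X) := by
  refine ⟨fun x y => ?_, fun x y hxy => ?_⟩
  · rw [switchT_apply, switchT_apply, h.1]
    ring
  · rw [switchT_apply]
    rcases h.2 x y hxy with h | h <;> rcases switchSign_eq_one_or X x with hx | hx <;>
      rcases switchSign_eq_one_or X y with hy | hy <;> simp [h, hx, hy]

lemma switchEquiv_of_forall_eq_mul {e e' : V → V → ℤ} (s : V → ℤ)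
    (hs : ∀ x, s x = 1 ∨ s x = -1) (h : ∀ x y, e' x y = s x * e x y * s y) :
    SwitchEquiv e e' := by
  have hsign : switchSign {x | s x = -1} = s := funext fun x => by
    rcases hs x with hx | hx <;> simp [switchSign, hx]
  exact ⟨{x | s x = -1}, funext₂ fun x y => by rw [switchT_apply, hsign, h]⟩

lemma switchEquiv_of_gT_eq {e e' : V → V → ℤ} (h : IsTournament e) (h' : IsTournament e')
    (hg : gT e' = gT e) : SwitchEquiv e e' := by
  classical
  rcases isEmpty_or_nonempty V with hV | ⟨⟨x₀⟩⟩
  · exact ⟨∅, Subsingleton.elim _ _⟩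
  -- switch at the vertices x whose edge to x₀ has different orientations in e and e'
  refine switchEquiv_of_forall_eq_mul (fun x => if x = x₀ then 1 else e x₀ x * e' x₀ x)
    (fun x => ?_) (fun x y => ?_)
  · split_ifs with hx
    · exact Or.inl rfl
    · rcases h.2 x₀ x (Ne.symm hx) with h1 | h1 <;>
        rcases h'.2 x₀ x (Ne.symm hx) with h2 | h2 <;> simp [h1, h2]
  by_cases hxy : x = y
  · subst hxy
    simp [h.apply_self, h'.apply_self]
  by_cases hx : x = x₀
  · subst hx
    simp only [if_neg (Ne.symm hxy), ↓reduceIte]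
    linear_combination (-e' x y) * h.mul_self_apply hxy
  by_cases hy : y = x₀
  · subst hy
    simp only [if_neg hx, ↓reduceIte]
    rw [h.1 y x, h'.1 y x]
    linear_combination (e' y x) * h.mul_self_apply (Ne.symm hx)
  simp only [if_neg hx, if_neg hy]
  have key := congrFun₃ hg x₀ x y
  simp only [gT, h.1 x₀ y, h'.1 x₀ y] at key
  linear_combination -(e' x₀ x * e' x₀ y) * key - e' x y * h'.mul_self_apply (Ne.symm hx) -
    e' x y * e' x₀ x * e' x₀ x * h'.mul_self_apply (Ne.symm hy)

def switchClass (e : V → V → ℤ) : Set (V → V → ℤ) := {e' | SwitchEquiv e e'}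

lemma mem_switchClass_iff {e e' : V → V → ℤ} (h : IsTournament e) :
    e' ∈ switchClass e ↔ IsTournament e' ∧ gT e' = gT e := by
  refine ⟨?_, fun ⟨h', hg⟩ => switchEquiv_of_gT_eq h h' hg⟩
  rintro ⟨X, rfl⟩
  exact ⟨h.switchT X, gT_switchT e X⟩

lemma switchT_injOn {e : V → V → ℤ} (h : IsTournament e) (x₀ : V) :
    Set.InjOn (switchT e) {X | x₀ ∉ X} := by
  intro X hX Y hY hXY
  ext x
  by_cases hx : x = x₀
  · subst hx
    exact iff_of_false hX hY
  have hx₀x := congrFun₂ hXY x₀ x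
  rcases h.2 x₀ x (Ne.symm hx) with he | he <;>
    by_cases hxX : x ∈ X <;> by_cases hxY : x ∈ Y <;> simp_all [switchT]

lemma ncard_switchClass [Fintype V] {e : V → V → ℤ} (h : IsTournament e) :
    (switchClass e).ncard = 2 ^ (Fintype.card V - 1) := by
  classical
  rcases isEmpty_or_nonempty V with hV | ⟨⟨x₀⟩⟩
  · have : switchClass e = {e} :=
      Set.eq_singleton_iff_unique_mem.2
        ⟨⟨∅, Subsingleton.elim _ _⟩, fun _ _ => Subsingleton.elim _ _⟩
    simp [this]
  set S := (Finset.univ.erase x₀).powerset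
  have hS : ∀ X : Finset V, X ∈ S ↔ x₀ ∉ X := by simp [S, Finset.subset_erase]
  have himage : switchClass e = (fun X : Finset V => switchT e X) '' S := by
    ext e'
    simp only [Set.mem_image, Finset.mem_coe, hS]
    constructor
    · rintro ⟨X, rfl⟩
      by_cases hx₀ : x₀ ∈ X
      · exact ⟨Xᶜ.toFinset, by simpa using hx₀, by simp [switchT_compl]⟩
      · exact ⟨X.toFinset, by simpa using hx₀, by simp⟩
    · rintro ⟨X, -, rfl⟩
      exact ⟨X, rfl⟩
  have hinj : Set.InjOn (fun X : Finset V => switchT e X) S := fun X hX Y hY hXY =>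
    Finset.coe_injective <|
      switchT_injOn h x₀ (by simpa [hS] using hX) (by simpa [hS] using hY) hXY
  rw [himage, hinj.ncard_image, Set.ncard_coe_finset, Finset.card_powerset,
    Finset.card_erase_of_mem (Finset.mem_univ _), Finset.card_univ]

section Orbits

variable {e e' : V → V → ℤ}

lemma smul_mem_switchClass_iff (h : IsTournament e) (he' : e' ∈ switchClass e)
    {σ : Equiv.Perm V} :
    σ • e' ∈ switchClass e ↔ σ ∈ autGroup (gT e) := by
  obtain ⟨h', hg⟩ := (mem_switchClass_iff h).1 he'
  rw [mem_switchClass_iff h, ← hg, gT_smul_eq_iff, mem_autGroup]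
  exact and_iff_right (h'.smul σ)

lemma mem_orbit_autGroup_iff (h : IsTournament e) (he' : e' ∈ switchClass e)
    {e'' : V → V → ℤ} :
    e'' ∈ orbit (autGroup (gT e)) e' ↔ e'' ∈ switchClass e ∧ TournIso e' e'' := by
  rw [tournIso_iff_exists_smul_eq]
  constructor
  · rintro ⟨σ, rfl⟩
    exact ⟨(smul_mem_switchClass_iff h he').2 σ.2, σ, rfl⟩
  · rintro ⟨he'', σ, rfl⟩
    exact ⟨⟨σ, (smul_mem_switchClass_iff h he').1 he''⟩, rfl⟩

lemma card_stabilizer_autGroup (h : IsTournament e) (he' : e' ∈ switchClass e) :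
    Nat.card (stabilizer (autGroup (gT e)) e') = (autT e').ncard := by
  obtain ⟨-, hg⟩ := (mem_switchClass_iff h).1 he'
  rw [← Nat.card_coe_set_eq]
  refine Nat.card_congr ((Equiv.subtypeEquivRight fun σ => ?_).trans
    (Equiv.subtypeSubtypeEquivSubtype fun hσ => ?_))
  · exact mem_autT_iff_smul_eq.symm
  · rw [mem_autGroup, ← hg]
    exact autT_subset_autG_gT e' hσ

end Orbits

end Tournaments

/-- let `C` be the switching class of a tournament `T₁ = e₁` on a finite
vertex set `V` and let `T 0, …, T (k-1)` be a complete set of representatives of the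
isomorphism classes of tournaments in `C` (members of `C`, pairwise non-isomorphic, and
every member of `C` is isomorphic to some `T i`).  Then
`∑ i, 1/|Aut(T i)| = 2^(|V|-1) / |Aut(C)|`. -/
theorem statement4 {V : Type*} [Fintype V] (e₁ : V → V → ℤ) (h₁ : IsTournament e₁)
    (k : ℕ) (T : Fin k → V → V → ℤ)
    (hmem : ∀ i, SwitchEquiv e₁ (T i))
    (hrep : ∀ i j, TournIso (T i) (T j) → i = j)
    (hcompl : ∀ e : V → V → ℤ, SwitchEquiv e₁ e → ∃ i, TournIso (T i) e) :
    ∑ i, (1 : ℚ) / ((autT (T i)).ncard : ℚ) =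
      (2 : ℚ) ^ (Fintype.card V - 1) / ((autG (gT e₁)).ncard : ℚ) := by
  have hT : ∀ i, T i ∈ switchClass e₁ := hmem
  have hunion : ⋃ i, orbit (autGroup (gT e₁)) (T i) = switchClass e₁ := by
    ext e
    simp only [Set.mem_iUnion, mem_orbit_autGroup_iff h₁ (hT _)]
    exact ⟨fun ⟨_, he, _⟩ => he, fun he => (hcompl e he).imp fun i hi => ⟨he, hi⟩⟩
  have hreps : ∀ i j, T j ∈ orbit (autGroup (gT e₁)) (T i) → i = j := fun i j hij =>
    hrep i j ((mem_orbit_autGroup_iff h₁ (hT i)).1 hij).2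
  have := MulAction.sum_one_div_card_stabilizer T hreps
  simp only [card_stabilizer_autGroup h₁ (hT _), hunion, ncard_switchClass h₁,
    card_autGroup] at this
  exact_mod_cast this
end

section
/- π(H(7)) ≥ 35/2^{11} and π(H(8)) ≥ 315/2^{14}; in particular each exceeds the bound 1/2^{r−1} for r = 7, 8 respectively. -/
def TriangleFree (r : ℕ) {V : Type*} [DecidableEq V] (H : Finset (Finset V)) : Prop :=
  (∀ A ∈ H, A.card = r) ∧
  ∀ S : Finset V, S.card = r + 1 → (H.filter (fun A => A ⊆ S)).card ≤ 2

noncomputable def exTri (r n : ℕ) : ℕ :=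
  sSup {m | ∃ H : Finset (Finset (Fin n)), TriangleFree r H ∧ H.card = m}

/-
Let `G` be an abelian group of order `N`. Replace every vertex of `G` by `t` copies and take as
edges the transversal `r`-sets whose projection to `G` sums into a fixed set `T` of two elements.
Three edges `S \ {x₁}`, `S \ {x₂}`, `S \ {x₃}` inside an `(r + 1)`-set `S` have sums
`∑ S - xᵢ`; two of these agree, so `xᵢ` and `xⱼ` have the same projection, yet both lie in the
third edge, which is transversal. Taking for `T` the two most frequent sums of `r`-subsets of `G`
gives at least `2 (N choose r) t ^ r / N` edges on `N t` vertices, hence edge density at least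
`2 N (N - 1) ⋯ (N - r + 1) / N ^ (r + 1)`. Deleting a vertex and averaging shows that
`ex(H(r), n) / (n choose r)` is nonincreasing, so the limit exists and inherits this bound;
`N = 32` gives about `0.0309` for `r = 7` and `0.0241` for `r = 8`.
-/

open Finset Filter Topology

section TriangleFree

variable {r : ℕ} {V W : Type*} [DecidableEq V] [DecidableEq W]

theorem triangleFree_iff_card_union_ne {H : Finset (Finset V)} :
    TriangleFree r H ↔ (∀ A ∈ H, #A = r) ∧
      ∀ A ∈ H, ∀ B ∈ H, ∀ C ∈ H, A ≠ B → A ≠ C → B ≠ C → #(A ∪ B ∪ C) ≠ r + 1 := by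
  refine and_congr_right fun hr => ⟨fun h A hA B hB C hC hAB hAC hBC hU => ?_, fun h S hS => ?_⟩
  · refine (h _ hU).not_gt (two_lt_card_iff.2 ⟨A, B, C, ?_, ?_, ?_, hAB, hAC, hBC⟩) <;>
      simp only [mem_filter] <;> grind
  · by_contra! h3
    obtain ⟨A, B, C, hA, hB, hC, hAB, hAC, hBC⟩ := two_lt_card_iff.1 h3
    simp only [mem_filter] at hA hB hC
    have hBA : ¬B ⊆ A := fun hBA =>
      hAB (eq_of_subset_of_card_le hBA (by rw [hr A hA.1, hr B hB.1])).symm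
    refine h A hA.1 B hB.1 C hC.1 hAB hAC hBC (le_antisymm ?_ ?_)
    · exact hS ▸ card_le_card (union_subset (union_subset hA.2 hB.2) hC.2)
    · calc r + 1 ≤ #(A ∪ B) := hr A hA.1 ▸ card_lt_card (left_lt_sup.2 hBA)
        _ ≤ #(A ∪ B ∪ C) := card_le_card subset_union_left

theorem TriangleFree.subset {H H' : Finset (Finset V)} (hH : TriangleFree r H) (h : H' ⊆ H) :
    TriangleFree r H' :=
  ⟨fun A hA => hH.1 A (h hA), fun S hS =>
    (card_le_card (filter_subset_filter _ h)).trans (hH.2 S hS)⟩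

theorem triangleFree_image_iff {f : V → W} (hf : Function.Injective f) {H : Finset (Finset V)} :
    TriangleFree r (H.image (image f)) ↔ TriangleFree r H := by
  simp only [triangleFree_iff_card_union_ne, forall_mem_image, ← image_union,
    card_image_of_injective _ hf, (image_injective hf).ne_iff]

theorem exists_image_image_eq {f : V → W} (hf : Function.Injective f) {H : Finset (Finset W)}
    (hH : ∀ A ∈ H, (A : Set W) ⊆ Set.range f) :
    ∃ H' : Finset (Finset V), H'.image (image f) = H := by
  classical
  refine ⟨H.image fun A => A.preimage f hf.injOn, ?_⟩
  rw [image_image]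
  conv_rhs => rw [← image_id (s := H)]
  refine image_congr fun A hA => ?_
  simp only [Function.comp_apply, image_preimage, id]
  exact filter_true_of_mem fun x hx => hH A hA hx

end TriangleFree

section Extremal

variable {r : ℕ}

theorem bddAbove_card_triangleFree (r n : ℕ) :
    BddAbove {m | ∃ H : Finset (Finset (Fin n)), TriangleFree r H ∧ #H = m} :=
  ⟨Fintype.card (Finset (Fin n)), by rintro m ⟨H, -, rfl⟩; exact card_le_univ H⟩

theorem exists_triangleFree_card_eq_exTri (r n : ℕ) :
    ∃ H : Finset (Finset (Fin n)), TriangleFree r H ∧ #H = exTri r n :=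
  Nat.sSup_mem (s := {m | ∃ H : Finset (Finset (Fin n)), TriangleFree r H ∧ #H = m})
    ⟨0, ∅, ⟨by simp, by simp⟩, rfl⟩ (bddAbove_card_triangleFree r n)

theorem card_le_exTri {n : ℕ} {H : Finset (Finset (Fin n))} (hH : TriangleFree r H) :
    #H ≤ exTri r n :=
  le_csSup (bddAbove_card_triangleFree r n) ⟨H, hH, rfl⟩

theorem card_le_exTri_card {V : Type*} [Fintype V] [DecidableEq V] {H : Finset (Finset V)}
    (hH : TriangleFree r H) : #H ≤ exTri r (Fintype.card V) := by
  let e := Fintype.equivFin V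
  rw [← card_image_of_injective H (image_injective e.injective)]
  exact card_le_exTri ((triangleFree_image_iff e.injective).2 hH)

theorem card_filter_notMem_le_exTri {n : ℕ} {H : Finset (Finset (Fin (n + 1)))}
    (hH : TriangleFree r H) (v : Fin (n + 1)) : #(H.filter (v ∉ ·)) ≤ exTri r n := by
  have hv : Function.Injective v.succAbove := Fin.succAbove_right_injective
  obtain ⟨H', hH'⟩ := exists_image_image_eq hv (H := H.filter (v ∉ ·)) fun A hA x hx => by
    rw [Fin.range_succAbove]
    exact fun (hxv : x = v) => (mem_filter.1 hA).2 (hxv ▸ hx)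
  have hTF := hH.subset (filter_subset (v ∉ ·) H)
  rw [← hH', triangleFree_image_iff hv] at hTF
  rw [← hH', card_image_of_injective _ (image_injective hv)]
  exact card_le_exTri hTF

theorem exTri_succ_mul_le (r n : ℕ) : (n + 1 - r) * exTri r (n + 1) ≤ (n + 1) * exTri r n := by
  obtain ⟨H, hH, hcard⟩ := exists_triangleFree_card_eq_exTri r (n + 1)
  have := card_nsmul_le_card_nsmul (fun (A : Finset (Fin (n + 1))) v => v ∉ A)
    (s := H) (t := univ) (m := n + 1 - r) (n := exTri r n)
    (fun A hA => by
      simp [bipartiteAbove, filter_not, card_sdiff_of_subset (subset_univ A), hH.1 A hA])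
    (fun v _ => card_filter_notMem_le_exTri hH v)
  simpa [hcard, mul_comm] using this

end Extremal

theorem exists_ne_two_mul_sum_le_card_mul_add {β : Type*} [Fintype β] [DecidableEq β]
    (hβ : 2 ≤ Fintype.card β) (c : β → ℕ) :
    ∃ b₁ b₂, b₁ ≠ b₂ ∧ 2 * ∑ b, c b ≤ Fintype.card β * (c b₁ + c b₂) := by
  obtain ⟨M, hM⟩ : ∃ M, Fintype.card β = M + 2 := ⟨_, (Nat.sub_add_cancel hβ).symm⟩
  obtain ⟨b₁, -, h₁⟩ := exists_max_image univ c (card_pos.1 (by rw [card_univ]; omega))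
  have hcard : #(univ.erase b₁) = M + 1 := by
    rw [card_erase_of_mem (mem_univ _), card_univ, hM]; rfl
  obtain ⟨b₂, hb₂, h₂⟩ := exists_max_image (univ.erase b₁) c (card_pos.1 (by omega))
  refine ⟨b₁, b₂, (ne_of_mem_erase hb₂).symm, ?_⟩
  have hR₁ : ∑ b ∈ univ.erase b₁, c b ≤ (M + 1) * c b₁ :=
    hcard ▸ sum_le_card_nsmul _ c _ fun b _ => h₁ b (mem_univ b)
  have hR₂ : ∑ b ∈ univ.erase b₁, c b ≤ (M + 1) * c b₂ := hcard ▸ sum_le_card_nsmul _ c _ h₂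
  rw [← add_sum_erase _ _ (mem_univ b₁), hM]
  -- `M + 1` times the goal is `M * hR₁ + (M + 2) * hR₂`
  refine Nat.le_of_mul_le_mul_left ?_ M.succ_pos
  linarith [Nat.mul_le_mul_left M hR₁, Nat.mul_le_mul_left (M + 2) hR₂]

theorem exists_two_mul_card_le_card_mul_card_filter_mem {α β : Type*} [Fintype β] [DecidableEq β]
    (hβ : 2 ≤ Fintype.card β) (s : Finset α) (f : α → β) :
    ∃ T : Finset β, #T ≤ 2 ∧ 2 * #s ≤ Fintype.card β * #(s.filter (f · ∈ T)) := by
  classical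
  obtain ⟨b₁, b₂, hne, h⟩ :=
    exists_ne_two_mul_sum_le_card_mul_add hβ fun b => #(s.filter (f · = b))
  refine ⟨{b₁, b₂}, card_le_two, ?_⟩
  have hdisj : Disjoint (s.filter (f · = b₁)) (s.filter (f · = b₂)) :=
    disjoint_filter.2 fun x _ h₁ h₂ => hne (h₁.symm.trans h₂)
  rw [card_eq_sum_card_fiberwise fun x _ => mem_univ (f x)]
  simpa only [mem_insert, mem_singleton, filter_or, card_union_of_disjoint hdisj] using h

theorem eq_or_eq_or_eq_of_card_le_two {α : Type*} [DecidableEq α] {T : Finset α} (hT : #T ≤ 2)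
    {x y z : α} (hx : x ∈ T) (hy : y ∈ T) (hz : z ∈ T) : x = y ∨ x = z ∨ y = z := by
  by_contra! hxyz
  have h3 : #{x, y, z} = 3 := card_eq_three.2 ⟨x, y, z, hxyz.1, hxyz.2.1, hxyz.2.2, rfl⟩
  have := card_le_card (show {x, y, z} ⊆ T by simp [insert_subset_iff, *])
  omega

section Blowup

variable {r : ℕ} {G X : Type*} [DecidableEq G] [DecidableEq X]

def graphOn (P : Finset G) (g : P → X) : Finset (G × X) :=
  univ.image fun a => (a.1, g a)

theorem mem_graphOn {P : Finset G} {g : P → X} {v : G × X} :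
    v ∈ graphOn P g ↔ ∃ h : v.1 ∈ P, g ⟨v.1, h⟩ = v.2 := by
  simp only [graphOn, mem_image, mem_univ, true_and]
  constructor
  · rintro ⟨a, rfl⟩; exact ⟨a.2, rfl⟩
  · rintro ⟨h, hg⟩; exact ⟨⟨v.1, h⟩, by rw [hg]⟩

theorem card_graphOn (P : Finset G) (g : P → X) : #(graphOn P g) = #P := by
  rw [graphOn, card_image_of_injective _ fun a b h => Subtype.ext (congrArg Prod.fst h)]
  simp

theorem injOn_fst_graphOn (P : Finset G) (g : P → X) :
    Set.InjOn Prod.fst (graphOn P g : Set (G × X)) := by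
  rintro ⟨a, x⟩ ha ⟨b, y⟩ hb (rfl : a = b)
  obtain ⟨_, hx⟩ := mem_graphOn.1 ha
  obtain ⟨_, hy⟩ := mem_graphOn.1 hb
  simp only at hx hy
  rw [← hx, ← hy]

theorem sum_fst_graphOn [AddCommMonoid G] (P : Finset G) (g : P → X) :
    ∑ v ∈ graphOn P g, v.1 = ∑ a ∈ P, a := by
  rw [graphOn, sum_image fun a _ b _ h => Subtype.ext (congrArg Prod.fst h)]
  exact sum_coe_sort P id

theorem image_fst_graphOn (P : Finset G) (g : P → X) : (graphOn P g).image Prod.fst = P := by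
  ext a
  simp [graphOn]

theorem graphOn_injective (P : Finset G) : Function.Injective (graphOn P : (P → X) → _) := by
  intro g g' h
  funext a
  obtain ⟨_, hg⟩ := mem_graphOn.1 (h ▸ mem_graphOn.2 ⟨a.2, rfl⟩ : (a.1, g a) ∈ graphOn P g')
  exact hg.symm

def blowup (F : Finset (Finset G)) (X : Type*) [Fintype X] [DecidableEq X] :
    Finset (Finset (G × X)) :=
  F.biUnion fun P => univ.image (graphOn P)

theorem mem_blowup [Fintype X] {F : Finset (Finset G)} {A : Finset (G × X)} :
    A ∈ blowup F X ↔ ∃ P ∈ F, ∃ g, graphOn P g = A := by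
  simp [blowup]

theorem card_blowup [Fintype X] {F : Finset (Finset G)} (hF : ∀ P ∈ F, #P = r) :
    #(blowup F X) = #F * Fintype.card X ^ r := by
  rw [blowup, card_biUnion]
  · rw [sum_congr rfl fun P hP => by
      rw [card_image_of_injective _ (graphOn_injective P), card_univ, Fintype.card_fun,
        Fintype.card_coe, hF P hP], sum_const, smul_eq_mul]
  · intro P _ Q _ hPQ
    simp only [Function.onFun, disjoint_left, mem_image, mem_univ, true_and]
    rintro _ ⟨g, rfl⟩ ⟨g', hg'⟩
    exact hPQ (by rw [← image_fst_graphOn P g, ← hg', image_fst_graphOn])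

theorem TriangleFree.of_sum_fst_mem [AddCommGroup G] {T : Finset G} (hT : #T ≤ 2)
    {H : Finset (Finset (G × X))} (hcard : ∀ A ∈ H, #A = r)
    (hinj : ∀ A ∈ H, Set.InjOn Prod.fst (A : Set (G × X)))
    (hsum : ∀ A ∈ H, ∑ v ∈ A, v.1 ∈ T) : TriangleFree r H := by
  refine triangleFree_iff_card_union_ne.2 ⟨hcard, fun A hA B hB C hC hAB hAC hBC hU => ?_⟩
  generalize hUdef : A ∪ B ∪ C = U at hU
  have eq_erase : ∀ E ∈ H, E ⊆ U → ∃ x ∈ U, U.erase x = E := fun E hE hEU =>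
    (covBy_iff_card_sdiff_eq_one.2
      ⟨hEU, by rw [card_sdiff_of_subset hEU, hU, hcard E hE]; simp⟩).exists_finset_erase
  -- Two edges of `U` with the same sum miss vertices with the same first coordinate, and
  -- those two vertices lie together in the third edge, on which `Prod.fst` is injective.
  have eq_of_sum_eq : ∀ x ∈ U, ∀ y ∈ U, ∀ z, x ≠ z → y ≠ z →
      Set.InjOn Prod.fst (U.erase z : Set (G × X)) →
      ∑ v ∈ U.erase x, v.1 = ∑ v ∈ U.erase y, v.1 → x = y := by
    intro x hx y hy z hxz hyz hz hxy
    rw [sum_erase_eq_sub hx, sum_erase_eq_sub hy, sub_right_inj] at hxy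
    exact hz (mem_erase.2 ⟨hxz, hx⟩) (mem_erase.2 ⟨hyz, hy⟩) hxy
  obtain ⟨a, ha, rfl⟩ := eq_erase A hA (hUdef ▸ subset_union_left.trans subset_union_left)
  obtain ⟨b, hb, rfl⟩ := eq_erase B hB (hUdef ▸ subset_union_right.trans subset_union_left)
  obtain ⟨c, hc, rfl⟩ := eq_erase C hC (hUdef ▸ subset_union_right)
  replace hAB : a ≠ b := by rintro rfl; exact hAB rfl
  replace hAC : a ≠ c := by rintro rfl; exact hAC rfl
  replace hBC : b ≠ c := by rintro rfl; exact hBC rfl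
  rcases eq_or_eq_or_eq_of_card_le_two hT (hsum _ hA) (hsum _ hB) (hsum _ hC) with h | h | h
  · exact hAB (eq_of_sum_eq a ha b hb c hAC hBC (hinj _ hC) h)
  · exact hAC (eq_of_sum_eq a ha c hc b hAB hBC.symm (hinj _ hB) h)
  · exact hBC (eq_of_sum_eq b hb c hc a hAB.symm hAC.symm (hinj _ hA) h)

theorem TriangleFree.blowup [AddCommGroup G] [Fintype X] {T : Finset G} (hT : #T ≤ 2)
    {F : Finset (Finset G)} (hF : ∀ P ∈ F, #P = r ∧ ∑ a ∈ P, a ∈ T) :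
    TriangleFree r (blowup F X) := by
  refine .of_sum_fst_mem hT ?_ ?_ ?_ <;> intro A hA <;>
    obtain ⟨P, hP, g, rfl⟩ := mem_blowup.1 hA
  · exact (card_graphOn P g).trans (hF P hP).1
  · exact injOn_fst_graphOn P g
  · exact (sum_fst_graphOn P g).symm ▸ (hF P hP).2

end Blowup

section LowerBound

variable (G : Type*) [AddCommGroup G] [Fintype G] [DecidableEq G]

theorem two_mul_choose_mul_pow_le_mul_exTri (hG : 2 ≤ Fintype.card G) (r t : ℕ) :
    2 * (Fintype.card G).choose r * t ^ r ≤ Fintype.card G * exTri r (Fintype.card G * t) := by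
  obtain ⟨T, hT, hF⟩ := exists_two_mul_card_le_card_mul_card_filter_mem hG (univ.powersetCard r)
    fun P : Finset G => ∑ a ∈ P, a
  set F := (univ.powersetCard r).filter fun P : Finset G => ∑ a ∈ P, a ∈ T
  have hFr : ∀ P ∈ F, #P = r ∧ ∑ a ∈ P, a ∈ T := fun P hP => by
    simpa only [F, mem_filter, mem_powersetCard_univ] using hP
  have hex := card_le_exTri_card (TriangleFree.blowup (X := Fin t) hT hFr)
  rw [card_blowup fun P hP => (hFr P hP).1, Fintype.card_prod, Fintype.card_fin] at hex
  rw [card_powersetCard, card_univ] at hF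
  calc 2 * (Fintype.card G).choose r * t ^ r ≤ Fintype.card G * #F * t ^ r :=
        Nat.mul_le_mul_right _ hF
    _ ≤ Fintype.card G * exTri r (Fintype.card G * t) := by
        rw [mul_assoc]; exact Nat.mul_le_mul_left _ hex

theorem two_mul_descFactorial_div_le_exTri_div_choose (hG : 2 ≤ Fintype.card G) {r t : ℕ}
    (hrt : r ≤ Fintype.card G * t) :
    (2 * (Fintype.card G).descFactorial r / Fintype.card G ^ (r + 1) : ℝ) ≤
      exTri r (Fintype.card G * t) / (Fintype.card G * t).choose r := by
  set N := Fintype.card G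
  have hchoose : (N * t).descFactorial r ≤ (N * t) ^ r := Nat.descFactorial_le_pow _ _
  rw [Nat.descFactorial_eq_factorial_mul_choose] at hchoose
  rw [Nat.descFactorial_eq_factorial_mul_choose,
    div_le_div_iff₀ (by positivity) (by exact_mod_cast Nat.choose_pos hrt)]
  have key : 2 * (r.factorial * N.choose r) * (N * t).choose r ≤ exTri r (N * t) * N ^ (r + 1) :=
    calc 2 * (r.factorial * N.choose r) * (N * t).choose r
        = 2 * N.choose r * (r.factorial * (N * t).choose r) := by ring
      _ ≤ 2 * N.choose r * (N * t) ^ r := Nat.mul_le_mul_left _ hchoose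
      _ = 2 * N.choose r * t ^ r * N ^ r := by ring
      _ ≤ N * exTri r (N * t) * N ^ r :=
        Nat.mul_le_mul_right _ (two_mul_choose_mul_pow_le_mul_exTri G hG r t)
      _ = exTri r (N * t) * N ^ (r + 1) := by ring
  exact_mod_cast key

end LowerBound

section Limit

theorem exTri_div_choose_succ_le {r n : ℕ} (hrn : r ≤ n) :
    (exTri r (n + 1) / (n + 1).choose r : ℝ) ≤ exTri r n / n.choose r := by
  rw [div_le_div_iff₀ (by exact_mod_cast Nat.choose_pos (hrn.trans n.le_succ))
    (by exact_mod_cast Nat.choose_pos hrn)]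
  have key :
      (n + 1) * (exTri r (n + 1) * n.choose r) ≤ (n + 1) * (exTri r n * (n + 1).choose r) :=
    calc (n + 1) * (exTri r (n + 1) * n.choose r)
        = (n + 1 - r) * exTri r (n + 1) * (n + 1).choose r := by
          rw [mul_comm (n + 1), mul_assoc, Nat.choose_mul_succ_eq]; ring
      _ ≤ (n + 1) * exTri r n * (n + 1).choose r :=
          Nat.mul_le_mul_right _ (exTri_succ_mul_le r n)
      _ = (n + 1) * (exTri r n * (n + 1).choose r) := by ring
  exact_mod_cast Nat.le_of_mul_le_mul_left key n.succ_pos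

theorem exists_tendsto_exTri_div_choose (r : ℕ) :
    ∃ L : ℝ, Tendsto (fun n => (exTri r n : ℝ) / n.choose r) atTop (𝓝 L) := by
  have hanti : Antitone fun k => (exTri r (k + r) : ℝ) / (k + r).choose r :=
    antitone_nat_of_succ_le fun k => by
      simpa only [add_right_comm k 1 r] using exTri_div_choose_succ_le (Nat.le_add_left r k)
  exact ⟨_, (tendsto_add_atTop_iff_nat r).1
    (tendsto_atTop_ciInf hanti ⟨0, by rintro _ ⟨k, rfl⟩; positivity⟩)⟩

theorem two_mul_descFactorial_div_le_of_tendsto {r N : ℕ} (hN : 2 ≤ N) {L : ℝ}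
    (hL : Tendsto (fun n => (exTri r n : ℝ) / n.choose r) atTop (𝓝 L)) :
    (2 * N.descFactorial r / N ^ (r + 1) : ℝ) ≤ L := by
  have : NeZero N := ⟨by omega⟩
  refine ge_of_tendsto (hL.comp (tendsto_id.const_mul_atTop' (by omega : 0 < N)))
    (eventually_atTop.2 ⟨r, fun t ht => ?_⟩)
  simpa [ZMod.card] using two_mul_descFactorial_div_le_exTri_div_choose (ZMod N)
    (by simpa using hN) (by simpa using ht.trans (Nat.le_mul_of_pos_left t (by omega : 0 < N)))

end Limit

/-- `π(H(7)) ≥ 35/2^11` and `π(H(8)) ≥ 315/2^14` (the defining limits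
exist); in particular each bound exceeds `1/2^(r-1)` for `r = 7, 8` respectively. -/
theorem statement14 :
    (∃ L : ℝ,
      Filter.Tendsto (fun n => (exTri 7 n : ℝ) / (n.choose 7 : ℝ)) Filter.atTop (nhds L) ∧
      35 / 2 ^ 11 ≤ L ∧ 1 / 2 ^ 6 < L) ∧
    (∃ L : ℝ,
      Filter.Tendsto (fun n => (exTri 8 n : ℝ) / (n.choose 8 : ℝ)) Filter.atTop (nhds L) ∧
      315 / 2 ^ 14 ≤ L ∧ 1 / 2 ^ 7 < L) ∧
    (1 / 2 ^ 6 : ℝ) < 35 / 2 ^ 11 ∧ (1 / 2 ^ 7 : ℝ) < 315 / 2 ^ 14 := by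
  obtain ⟨L₇, h₇⟩ := exists_tendsto_exTri_div_choose 7
  obtain ⟨L₈, h₈⟩ := exists_tendsto_exTri_div_choose 8
  have hL₇ : (35 / 2 ^ 11 : ℝ) ≤ L₇ := le_trans (by norm_num [Nat.descFactorial])
    (two_mul_descFactorial_div_le_of_tendsto (N := 32) (by norm_num) h₇)
  have hL₈ : (315 / 2 ^ 14 : ℝ) ≤ L₈ := le_trans (by norm_num [Nat.descFactorial])
    (two_mul_descFactorial_div_le_of_tendsto (N := 32) (by norm_num) h₈)
  have h₆ : (1 / 2 ^ 6 : ℝ) < 35 / 2 ^ 11 := by norm_num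
  have h₇' : (1 / 2 ^ 7 : ℝ) < 315 / 2 ^ 14 := by norm_num
  exact ⟨⟨L₇, h₇, hL₇, h₆.trans_le hL₇⟩, ⟨L₈, h₈, hL₈, h₇'.trans_le hL₈⟩, h₆, h₇'⟩
end

section
/- Let p be an odd prime and let f: F_p → {0,±1} be any function with f(x)=0 if and only if x=0, such that f⋆f = χ⋆χ. Then f = χ or f = −χ. -/
/-!
For a primitive `p`-th root of unity `ζ`, the sum `∑ a, f a * ζ ^ a` turns convolution into
multiplication, so `f ⋆ f = χ ⋆ χ` gives `f̂(ζ^t)² = χ̂(ζ^t)²` for every `t`. At `t = 0` this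
forces `∑ f = ∑ χ = 0`; at `t = 1` it gives `f̂(ζ) = ε χ̂(ζ)` with `ε = ±1`. As `f - εχ` is
integer-valued, the vanishing of its transform at `ζ` passes to every `ζ^t` with `0 < t < p`,
a root of the same minimal polynomial `Φ_p` over `ℤ`. So the polynomial `∑ a, (f - εχ)(a) X^a`,
of degree `< p`, has the `p` roots `ζ^t` and is zero.
-/

open scoped Classical in
/-- The quadratic character `χ` of a finite field. -/
noncomputable def chi {F : Type*} [Field F] [Fintype F] (x : F) : ℤ :=
  if x = 0 then 0 else if IsSquare x then 1 else -1

open Polynomial Finset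

section Convolution

variable {G R : Type*} [AddCommGroup G] [Fintype G] [CommRing R]

def conv (f g : G → R) (b : G) : R := ∑ a, f (b - a) * g a

theorem sum_conv_mul_addChar (f g : G → R) (ψ : AddChar G R) :
    ∑ b, conv f g b * ψ b = (∑ a, f a * ψ a) * ∑ a, g a * ψ a := by
  calc ∑ b, conv f g b * ψ b = ∑ a, ∑ b, f (b - a) * g a * ψ b := by
        simp_rw [conv, sum_mul]
        exact sum_comm
    _ = ∑ a, ∑ c, f c * g a * ψ (c + a) := by
        refine sum_congr rfl fun a _ => Fintype.sum_equiv (Equiv.subRight a) _ _ fun b => ?_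
        rw [Equiv.subRight_apply, sub_add_cancel]
    _ = (∑ a, f a * ψ a) * ∑ a, g a * ψ a := by
        rw [sum_mul_sum, sum_comm]
        refine sum_congr rfl fun a _ => sum_congr rfl fun c _ => ?_
        rw [AddChar.map_add_eq_mul]
        ring

end Convolution

section GenPoly

variable {n : ℕ} [NeZero n] {R : Type*} [CommRing R]

noncomputable def genPoly (f : ZMod n → R) : R[X] := ∑ a, monomial a.val (f a)

theorem coeff_genPoly_val (f : ZMod n → R) (a : ZMod n) : (genPoly f).coeff a.val = f a := by
  rw [genPoly, finsetSum_coeff, sum_eq_single a]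
  · exact coeff_monomial_same _ _
  · exact fun b _ hba => coeff_monomial_of_ne _ (fun h => hba (ZMod.val_injective n h).symm)
  · exact fun h => absurd (mem_univ a) h

theorem natDegree_genPoly_lt (f : ZMod n → R) : (genPoly f).natDegree < n := by
  calc (genPoly f).natDegree ≤ n - 1 :=
        natDegree_sum_le_of_forall_le _ _ fun a _ =>
          (natDegree_monomial_le _).trans (Nat.le_sub_one_of_lt (ZMod.val_lt a))
    _ < n := Nat.sub_one_lt (NeZero.ne n)

theorem eq_zero_of_genPoly_eq_zero {f : ZMod n → R} (hf : genPoly f = 0) : f = 0 :=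
  funext fun a => by rw [Pi.zero_apply, ← coeff_genPoly_val f a, hf, coeff_zero]

theorem aeval_genPoly {A : Type*} [CommRing A] [Algebra R A] (f : ZMod n → R) (x : A) :
    aeval x (genPoly f) = ∑ a, algebraMap R A (f a) * x ^ a.val := by
  simp [genPoly, aeval_monomial]

end GenPoly

namespace IsPrimitiveRoot

theorem aeval_pow_eq_zero {K : Type*} [Field K] [CharZero K] {n : ℕ} {ζ : K}
    (hζ : IsPrimitiveRoot ζ n) (hn : 0 < n) {P : ℤ[X]} (hP : aeval ζ P = 0) {t : ℕ}
    (ht : t.Coprime n) : aeval (ζ ^ t) P = 0 := by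
  have hdvd : cyclotomic n ℤ ∣ P := by
    rw [cyclotomic_eq_minpoly hζ hn]
    exact minpoly.isIntegrallyClosed_dvd (hζ.isIntegral hn) hP
  rw [cyclotomic_eq_minpoly (hζ.pow_of_coprime t ht) hn] at hdvd
  exact aeval_eq_zero_of_dvd_aeval_eq_zero hdvd (minpoly.aeval ℤ _)

theorem eq_zero_of_aeval_pow_eq_zero {K : Type*} [CommRing K] [IsDomain K] [CharZero K]
    {n : ℕ} {ζ : K} (hζ : IsPrimitiveRoot ζ n) {P : ℤ[X]} (hdeg : P.natDegree < n)
    (h : ∀ t < n, aeval (ζ ^ t) P = 0) : P = 0 := by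
  refine map_injective (algebraMap ℤ K) (algebraMap ℤ K).injective_int ?_
  rw [Polynomial.map_zero]
  refine eq_zero_of_natDegree_lt_card_of_eval_eq_zero _ (f := fun t : Fin n => ζ ^ (t : ℕ))
    (fun i j hij => Fin.ext (hζ.pow_inj i.2 j.2 hij)) (fun t => ?_) ?_
  · rw [eval_map_algebraMap]
    exact h t t.2
  · rw [Fintype.card_fin]
    exact natDegree_map_le.trans_lt hdeg

end IsPrimitiveRoot

theorem eq_zero_of_sum_eq_zero_of_aeval_genPoly_eq_zero {K : Type*} [Field K] [CharZero K]
    {p : ℕ} [Fact p.Prime] {ζ : K} (hζ : IsPrimitiveRoot ζ p) {f : ZMod p → ℤ}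
    (hsum : ∑ a, f a = 0) (hζf : aeval ζ (genPoly f) = 0) : f = 0 := by
  have hp : p.Prime := Fact.out
  refine eq_zero_of_genPoly_eq_zero <|
    hζ.eq_zero_of_aeval_pow_eq_zero (natDegree_genPoly_lt f) fun t ht => ?_
  obtain rfl | ht0 := eq_or_ne t 0
  · simpa [aeval_genPoly] using congrArg (Int.cast : ℤ → K) hsum
  · exact hζ.aeval_pow_eq_zero hp.pos hζf (Nat.coprime_of_lt_prime ht0 ht hp).symm

theorem eq_or_eq_neg_of_conv_self_eq {p : ℕ} [Fact p.Prime] {f g : ZMod p → ℤ}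
    (hconv : conv f f = conv g g) (hg : ∑ a, g a = 0) : f = g ∨ f = -g := by
  obtain ⟨ζ, hζ⟩ : ∃ ζ : ℂ, IsPrimitiveRoot ζ p :=
    ⟨_, Complex.isPrimitiveRoot_exp p (NeZero.ne p)⟩
  have hsq (ψ : AddChar (ZMod p) ℂ) :
      (∑ a, (f a : ℂ) * ψ a) ^ 2 = (∑ a, (g a : ℂ) * ψ a) ^ 2 := by
    simp only [sq, ← sum_conv_mul_addChar]
    simpa [conv] using congrArg (fun h : ZMod p → ℤ => ∑ b, (h b : ℂ) * ψ b) hconv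
  have hf : ∑ a, f a = 0 := by
    simpa [← Int.cast_sum, hg] using hsq 1
  have haeval (h : ZMod p → ℤ) :
      aeval ζ (genPoly h) = ∑ a, (h a : ℂ) * AddChar.zmodChar p hζ.pow_eq_one a := by
    simp [aeval_genPoly, AddChar.zmodChar_apply]
  rcases sq_eq_sq_iff_eq_or_eq_neg.mp (hsq (AddChar.zmodChar p hζ.pow_eq_one)) with h | h
  · left
    refine sub_eq_zero.mp (eq_zero_of_sum_eq_zero_of_aeval_genPoly_eq_zero hζ ?_ ?_)
    · simp [sum_sub_distrib, hf, hg]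
    · simp [haeval, sub_mul, sum_sub_distrib, h]
  · right
    refine add_eq_zero_iff_eq_neg.mp (eq_zero_of_sum_eq_zero_of_aeval_genPoly_eq_zero hζ ?_ ?_)
    · simp [sum_add_distrib, hf, hg]
    · simp [haeval, add_mul, sum_add_distrib, h]

theorem chi_eq_quadraticChar {F : Type*} [Field F] [Fintype F] [DecidableEq F] (x : F) :
    chi x = quadraticChar F x := by
  by_cases h : x = 0 <;> by_cases hs : IsSquare x <;>
    simp [chi, quadraticChar_apply, quadraticCharFun, h, hs]

theorem sum_chi_eq_zero {F : Type*} [Field F] [Fintype F] (hF : ringChar F ≠ 2) :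
    ∑ x : F, chi x = 0 := by
  classical
  simpa only [chi_eq_quadraticChar] using quadraticChar_sum_zero hF

theorem statement16_general (p : ℕ) [Fact p.Prime] (hp : p ≠ 2) (f : ZMod p → ℤ)
    (hconv : ∀ b : ZMod p, ∑ a : ZMod p, f (b - a) * f a = ∑ a : ZMod p, chi (b - a) * chi a) :
    (∀ x, f x = chi x) ∨ (∀ x, f x = - chi x) := by
  have hchi : ∑ a : ZMod p, chi a = 0 := sum_chi_eq_zero (by rwa [ZMod.ringChar_zmod_n])
  rcases eq_or_eq_neg_of_conv_self_eq (funext hconv) hchi with h | h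
  · exact Or.inl (congrFun h)
  · exact Or.inr (congrFun h)

/-- let `p` be an odd prime and `f : F_p → {0,±1}` with `f(x) = 0` iff
`x = 0`.  If `f ⋆ f = χ ⋆ χ`, where `(f ⋆ g)(b) = ∑_a f(b-a)·g(a)` is the convolution on
the additive group `F_p`, then `f = χ` or `f = -χ`. -/
theorem statement16 (p : ℕ) [Fact p.Prime] (hp : p ≠ 2) (f : ZMod p → ℤ)
    (hzero : ∀ x, f x = 0 ↔ x = 0)
    (hpm : ∀ x, f x = 1 ∨ f x = 0 ∨ f x = -1)
    (hconv : ∀ b : ZMod p, ∑ a : ZMod p, f (b - a) * f a = ∑ a : ZMod p, chi (b - a) * chi a) :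
    (∀ x, f x = chi x) ∨ (∀ x, f x = - chi x) :=
  statement16_general p hp f hconv
end
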